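/- arXiv:2012.04870 — 2 statements merged into one kernel-verified Lean document; each statement's English description precedes it below -/
import Mathlib

section
/- Let U be a Hilbert space, a : U × U → ℂ a bounded sesquilinear form, and T : U → U a bounded linear isomorphism. If the form a^T(u,v) := a(u, T v) is coercive, i.e. there exists c > 0 with |a^T(u,u)| ≥ c‖u‖² for all u ∈ U, then the bounded operator A : U → U defined via the Riesz representation by ⟨A u, v⟩ = a(u,v) is invertible. -/
/-!
Since `⟪A x, T x⟫ = ⟪T† A x, x⟫`, coercivity of the twisted form says that `T† A` is coercive in
the usual sense, so it is invertible by the complex Lax–Milgram theorem. As `T†` is invertible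
along with `T`, so is `A = (T†)⁻¹ (T† A)`.
-/

open scoped NNReal InnerProductSpace

namespace ContinuousLinearMap

variable {𝕜 E : Type*} [RCLike 𝕜] [NormedAddCommGroup E] [InnerProductSpace 𝕜 E] [CompleteSpace E]

theorem isUnit_of_forall_le_norm_inner_map_equiv (A : E →L[𝕜] E) (T : E ≃L[𝕜] E) {c : ℝ≥0}
    (hc : 0 < c) (h : ∀ x, ‖x‖ ^ 2 * c ≤ ‖⟪A x, T x⟫_𝕜‖) : IsUnit A := by
  have hTA : IsUnit (adjoint (T : E →L[𝕜] E) * A) :=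
    isUnit_of_forall_le_norm_inner_map _ hc fun x ↦ by
      rw [mul_apply_eq_comp, adjoint_inner_left]
      exact h x
  have hT : IsUnit (adjoint (T : E →L[𝕜] E)) := by
    rw [← star_eq_adjoint]
    exact T.toUnit.isUnit.star
  exact (hT.unit.isUnit_units_mul A).mp hTA

end ContinuousLinearMap

open ComplexConjugate

theorem stmt_3_general (U : Type*) [NormedAddCommGroup U] [InnerProductSpace ℂ U] [CompleteSpace U]
    (a : U → U → ℂ)
    (T : U ≃L[ℂ] U)
    (hcoer : ∃ c : ℝ, 0 < c ∧ ∀ u : U, c * ‖u‖ ^ 2 ≤ ‖a u (T u)‖)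
    (A : U →L[ℂ] U) (hA : ∀ u v, (inner ℂ (A u) v : ℂ) = a u v) :
    ∃ B : U →L[ℂ] U, B.comp A = ContinuousLinearMap.id ℂ U ∧
      A.comp B = ContinuousLinearMap.id ℂ U := by
  obtain ⟨c, hc, hcoer⟩ := hcoer
  obtain ⟨A, rfl⟩ : IsUnit A :=
    A.isUnit_of_forall_le_norm_inner_map_equiv T (c := ⟨c, hc.le⟩) hc fun u ↦ by
      rw [hA, mul_comm]
      exact hcoer u
  exact ⟨↑A⁻¹, A.inv_mul, A.mul_inv⟩

/-- if the form `a^T(u,v) = a(u, Tv)` is coercive for some bounded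
isomorphism `T`, then the bounded operator `A` representing the bounded sesquilinear
form `a` is invertible. -/
theorem stmt_3 (U : Type*) [NormedAddCommGroup U] [InnerProductSpace ℂ U] [CompleteSpace U]
    (a : U → U → ℂ)
    (hadd1 : ∀ u u' v, a (u + u') v = a u v + a u' v)
    (hadd2 : ∀ u v v', a u (v + v') = a u v + a u v')
    (hsmul1 : ∀ (c : ℂ) u v, a (c • u) v = conj c * a u v)
    (hsmul2 : ∀ (c : ℂ) u v, a u (c • v) = c * a u v)
    (hbdd : ∃ M : ℝ, ∀ u v, ‖a u v‖ ≤ M * ‖u‖ * ‖v‖)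
    (T : U ≃L[ℂ] U)
    (hcoer : ∃ c : ℝ, 0 < c ∧ ∀ u : U, c * ‖u‖ ^ 2 ≤ ‖a u (T u)‖)
    (A : U →L[ℂ] U) (hA : ∀ u v, (inner ℂ (A u) v : ℂ) = a u v) :
    ∃ B : U →L[ℂ] U, B.comp A = ContinuousLinearMap.id ℂ U ∧
      A.comp B = ContinuousLinearMap.id ℂ U :=
  stmt_3_general U a T hcoer A hA
end

section
/- Let H and L be Hilbert spaces, B : H → L a compact linear operator with dense range, and φ ∈ L an element not in the range of B. Suppose (g_n) is a sequence in H such that B g_n → φ in L. Then ‖g_n‖ → ∞. -/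
/-!
A bound `‖gₙ‖ ≤ R` along infinitely many `n` would put `φ` in the range of `B`. Indeed, passing to
the limit in `⟪B gₙ, ψ⟫ = ⟪gₙ, B† ψ⟫` gives `‖⟪φ, ψ⟫‖ ≤ R ‖B† ψ‖` for every `ψ`, so
`B† ψ ↦ ⟪φ, ψ⟫` is a well-defined bounded functional on the range of `B†`. Extending it by
Hahn–Banach and representing it by Riesz as `⟪g, ·⟫` yields `⟪B g, ψ⟫ = ⟪φ, ψ⟫` for all `ψ`,
that is `B g = φ`.
-/

open Filter Topology
open scoped InnerProductSpace InnerProduct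

section

variable {𝕜 E F : Type*} [RCLike 𝕜]

theorem LinearMap.exists_strongDual_comp_eq_of_norm_le [NormedAddCommGroup E] [NormedSpace 𝕜 E]
    [AddCommGroup F] [Module 𝕜 F] (A : F →ₗ[𝕜] E) (ℓ : F →ₗ[𝕜] 𝕜) (R : ℝ)
    (hℓ : ∀ ψ, ‖ℓ ψ‖ ≤ R * ‖A ψ‖) : ∃ Λ : StrongDual 𝕜 E, ∀ ψ, Λ (A ψ) = ℓ ψ := by
  have hker : LinearMap.ker A ≤ LinearMap.ker ℓ := fun ψ hψ => by
    simpa [LinearMap.mem_ker.mp hψ] using hℓ ψ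
  let f : LinearMap.range A →ₗ[𝕜] 𝕜 := (LinearMap.ker A).liftQ ℓ hker ∘ₗ A.quotKerEquivRange.symm
  have hf : ∀ ψ, f ⟨A ψ, LinearMap.mem_range_self A ψ⟩ = ℓ ψ := fun ψ => by
    simp [f]
  have hf_bound : ∀ x, ‖f x‖ ≤ R * ‖x‖ := by
    rintro ⟨_, ψ, rfl⟩
    simpa [hf] using hℓ ψ
  obtain ⟨Λ, hΛ, -⟩ := exists_extension_norm_eq _ (f.mkContinuous R hf_bound)
  exact ⟨Λ, fun ψ => (hΛ ⟨A ψ, LinearMap.mem_range_self A ψ⟩).trans (hf ψ)⟩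

variable [NormedAddCommGroup E] [InnerProductSpace 𝕜 E] [CompleteSpace E]
  [NormedAddCommGroup F] [InnerProductSpace 𝕜 F] [CompleteSpace F]

theorem ContinuousLinearMap.mem_range_of_norm_inner_le_mul_norm_adjoint (B : E →L[𝕜] F) {φ : F}
    (R : ℝ) (hφ : ∀ ψ, ‖⟪φ, ψ⟫_𝕜‖ ≤ R * ‖(B†) ψ‖) : φ ∈ Set.range B := by
  obtain ⟨Λ, hΛ⟩ :=
    (B†).toLinearMap.exists_strongDual_comp_eq_of_norm_le (innerₛₗ 𝕜 φ) R hφ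
  refine ⟨(InnerProductSpace.toDual 𝕜 E).symm Λ, ext_inner_right 𝕜 fun ψ => ?_⟩
  rw [← adjoint_inner_right, InnerProductSpace.toDual_symm_apply]
  exact hΛ ψ

theorem ContinuousLinearMap.mem_range_of_tendsto_of_frequently_norm_le (B : E →L[𝕜] F)
    {ι : Type*} {l : Filter ι} {g : ι → E} {φ : F} {R : ℝ}
    (hconv : Tendsto (fun n => B (g n)) l (𝓝 φ)) (hbdd : ∃ᶠ n in l, ‖g n‖ ≤ R) :
    φ ∈ Set.range B := by
  refine B.mem_range_of_norm_inner_le_mul_norm_adjoint R fun ψ => ?_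
  have hclosed : IsClosed {x : F | ‖⟪x, ψ⟫_𝕜‖ ≤ R * ‖(B†) ψ‖} :=
    isClosed_le (continuous_id.inner continuous_const).norm continuous_const
  refine hclosed.mem_of_frequently_of_tendsto (hbdd.mono fun n hn => ?_) hconv
  calc ‖⟪B (g n), ψ⟫_𝕜‖ = ‖⟪g n, (B†) ψ⟫_𝕜‖ := by rw [adjoint_inner_right]
    _ ≤ ‖g n‖ * ‖(B†) ψ‖ := norm_inner_le_norm _ _
    _ ≤ R * ‖(B†) ψ‖ := by gcongr

end

theorem stmt_4_general (H L : Type*)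
    [NormedAddCommGroup H] [InnerProductSpace ℂ H] [CompleteSpace H]
    [NormedAddCommGroup L] [InnerProductSpace ℂ L] [CompleteSpace L]
    (B : H →L[ℂ] L)
    (φ : L) (hφ : φ ∉ Set.range B)
    (g : ℕ → H) (hconv : Tendsto (fun n => B (g n)) atTop (𝓝 φ)) :
    Tendsto (fun n => ‖g n‖) atTop atTop := by
  rw [tendsto_atTop]
  by_contra! hunbdd
  obtain ⟨R, hR⟩ := hunbdd
  exact hφ (B.mem_range_of_tendsto_of_frequently_norm_le hconv (hR.mono fun _ hn => hn.le))

/-- if `B` is a compact operator with dense range, `φ` is not in the range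
of `B`, and `B gₙ → φ`, then `‖gₙ‖ → ∞`. -/
theorem stmt_4 (H L : Type*)
    [NormedAddCommGroup H] [InnerProductSpace ℂ H] [CompleteSpace H]
    [NormedAddCommGroup L] [InnerProductSpace ℂ L] [CompleteSpace L]
    (B : H →L[ℂ] L) (hB : IsCompactOperator B) (hdense : DenseRange B)
    (φ : L) (hφ : φ ∉ Set.range B)
    (g : ℕ → H) (hconv : Tendsto (fun n => B (g n)) atTop (𝓝 φ)) :
    Tendsto (fun n => ‖g n‖) atTop atTop :=
  stmt_4_general H L B φ hφ g hconv
end
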